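/- If X₁ and X₂ are intrinsic Lorentzian pre-length spaces, then their Lorentzian amalgamation X = X₁ ⊔_A X₂ is intrinsic: for all [x],[y], τ̃([x],[y]) = sup{ L_{τ̃}(γ) | γ a future-directed causal curve from [x] to [y] }. -/

import Mathlib

/-!
Every causal chain in `X₁ ⊔ X₂` can be shortened, without decreasing its `τ`-sum, to a single
causal pair inside one factor or to two causal pairs `u ≤ a`, `f a ≤ v` joined across the gluing
set. A single pair is approximated by causal curves of its factor, which is intrinsic, and these
curves project to causal curves of the amalgamation. For a crossing, curves of the two legs are
projected and concatenated in the quotient, whose `τ̃`-length is superadditive. A leg with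
`τ = 0` may carry no causal curve at all; then the gluing point is first moved along the other
(timelike) leg, using lower semicontinuity of `τ` and that the gluing sets are not timelike
locally isolating, until both legs are timelike.
-/

open Set Metric

variable {α : Type*}

/-- The generating relation identifying `a ∈ A₁` with `f a`. -/
def glueRel {X₁ X₂ : Type*} (A₁ : Set X₁) (f : X₁ → X₂) : X₁ ⊕ X₂ → X₁ ⊕ X₂ → Prop :=
  fun p q => ∃ a ∈ A₁, p = Sum.inl a ∧ q = Sum.inr (f a)

/-- The equivalence relation generated by `a ∼ f a`. -/
def glueEqv {X₁ X₂ : Type*} (A₁ : Set X₁) (f : X₁ → X₂) : X₁ ⊕ X₂ → X₁ ⊕ X₂ → Prop :=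
  Relation.EqvGen (glueRel A₁ f)

def glueSetoid {X₁ X₂ : Type*} (A₁ : Set X₁) (f : X₁ → X₂) : Setoid (X₁ ⊕ X₂) :=
  ⟨glueEqv A₁ f, Relation.EqvGen.is_equivalence _⟩

/-- The disjoint union of two relations. -/
def sumRel {X₁ X₂ : Type*} (r₁ : X₁ → X₁ → Prop) (r₂ : X₂ → X₂ → Prop) :
    X₁ ⊕ X₂ → X₁ ⊕ X₂ → Prop
  | Sum.inl x, Sum.inl y => r₁ x y
  | Sum.inr x, Sum.inr y => r₂ x y
  | _, _ => False

/-- One step `p ∼ p' R q' ∼ q` of a chain. -/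
def glueStep (R eqv : α → α → Prop) : α → α → Prop := fun p q =>
  ∃ p' q', eqv p p' ∧ R p' q' ∧ eqv q' q

/-- The quotient relation: there is a finite chain `x ∼ x₁ R y₁ ∼ x₂ R y₂ ∼ ⋯ ∼ xₙ R yₙ ∼ y`. -/
def quotRel (R eqv : α → α → Prop) : α → α → Prop :=
  Relation.TransGen (glueStep R eqv)

/-- A gluing chain from `x` to `y`: a nonempty list of pairs `(xᵢ, yᵢ)` with
`x ∼ x₁`, `yᵢ ∼ xᵢ₊₁`, and `yₙ ∼ y`. -/
def IsGlueChain (eqv : α → α → Prop) (x y : α) (l : List (α × α)) : Prop :=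
  l ≠ [] ∧ l.Chain' (fun p q => eqv p.2 q.1) ∧
    (∃ p, l.head? = some p ∧ eqv x p.1) ∧ (∃ p, l.getLast? = some p ∧ eqv p.2 y)

/-- A causal chain: a gluing chain in which each pair is causally related. -/
def IsCausalChain (le eqv : α → α → Prop) (x y : α) (l : List (α × α)) : Prop :=
  IsGlueChain eqv x y l ∧ ∀ p ∈ l, le p.1 p.2

/-- The quotient time separation: supremum of `Σ τ(xᵢ,yᵢ)` over causal chains. -/
noncomputable def quotTau (τ : α → α → ENNReal) (le eqv : α → α → Prop) (x y : α) : ENNReal :=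
  sSup {v | ∃ l, IsCausalChain le eqv x y l ∧ v = (l.map fun p => τ p.1 p.2).sum}

/-- The quotient semi-metric: infimum of `Σ d(xᵢ,yᵢ)` over gluing chains. -/
noncomputable def quotDist (D : α → α → ENNReal) (eqv : α → α → Prop) (x y : α) : ENNReal :=
  sInf {v | ∃ l, IsGlueChain eqv x y l ∧ v = (l.map fun p => D p.1 p.2).sum}

/-- The disjoint union time separation (zero across the two factors). -/
noncomputable def sumTau {X₁ X₂ : Type*} (τ₁ : X₁ → X₁ → ENNReal) (τ₂ : X₂ → X₂ → ENNReal) :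
    X₁ ⊕ X₂ → X₁ ⊕ X₂ → ENNReal
  | Sum.inl x, Sum.inl y => τ₁ x y
  | Sum.inr x, Sum.inr y => τ₂ x y
  | _, _ => 0

/-- The disjoint union (extended) distance (infinite across the two factors). -/
noncomputable def sumEDist {X₁ X₂ : Type*} [PseudoEMetricSpace X₁] [PseudoEMetricSpace X₂] :
    X₁ ⊕ X₂ → X₁ ⊕ X₂ → ENNReal
  | Sum.inl x, Sum.inl y => edist x y
  | Sum.inr x, Sum.inr y => edist x y
  | _, _ => ⊤

/-- A future-directed causal curve w.r.t. an extended distance `D` (locally Lipschitz)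
and a causal relation `R` (monotone). -/
def IsCausalCurveE (D : α → α → ENNReal) (R : α → α → Prop) (γ : ℝ → α) (a b : ℝ) : Prop :=
  a ≤ b ∧
  (∀ t ∈ Set.Icc a b, ∃ K : NNReal, ∃ ε > (0:ℝ), ∀ s ∈ Set.Icc a b, ∀ s' ∈ Set.Icc a b,
      |s - t| < ε → |s' - t| < ε → D (γ s) (γ s') ≤ (K : ENNReal) * ENNReal.ofReal |s - s'|) ∧
  ∀ s ∈ Set.Icc a b, ∀ t ∈ Set.Icc a b, s < t → R (γ s) (γ t)

/-- The `τ`-length of a curve: infimum over partitions of `Σ τ(γ(tᵢ),γ(tᵢ₊₁))`. -/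
noncomputable def tauLen (T : α → α → ENNReal) (γ : ℝ → α) (a b : ℝ) : ENNReal :=
  sInf {v | ∃ n : ℕ, ∃ t : Fin (n + 1) → ℝ, StrictMono t ∧ t 0 = a ∧ t (Fin.last n) = b ∧
    v = ∑ i : Fin n, T (γ (t i.castSucc)) (γ (t i.succ))}

/-- The `d`-length of a curve: supremum over partitions of `Σ d(γ(tᵢ),γ(tᵢ₊₁))`. -/
noncomputable def dLen (D : α → α → ENNReal) (γ : ℝ → α) (a b : ℝ) : ENNReal :=
  sSup {v | ∃ n : ℕ, ∃ t : Fin (n + 1) → ℝ, StrictMono t ∧ t 0 = a ∧ t (Fin.last n) = b ∧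
    v = ∑ i : Fin n, D (γ (t i.castSucc)) (γ (t i.succ))}

/-- The quotient relation, descended to the quotient space. -/
def qRel {X₁ X₂ : Type*} (A₁ : Set X₁) (f : X₁ → X₂) (R : X₁ ⊕ X₂ → X₁ ⊕ X₂ → Prop)
    (p q : Quotient (glueSetoid A₁ f)) : Prop :=
  ∃ x y, Quotient.mk (glueSetoid A₁ f) x = p ∧ Quotient.mk (glueSetoid A₁ f) y = q ∧
    quotRel R (glueEqv A₁ f) x y

/-- The quotient semi-metric, descended to the quotient space. -/
noncomputable def qDist {X₁ X₂ : Type*} [PseudoEMetricSpace X₁] [PseudoEMetricSpace X₂]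
    (A₁ : Set X₁) (f : X₁ → X₂) (p q : Quotient (glueSetoid A₁ f)) : ENNReal :=
  quotDist sumEDist (glueEqv A₁ f) p.out q.out

/-- The quotient time separation, descended to the quotient space. -/
noncomputable def qTau {X₁ X₂ : Type*} (A₁ : Set X₁) (f : X₁ → X₂)
    (τ₁ : X₁ → X₁ → ENNReal) (τ₂ : X₂ → X₂ → ENNReal)
    (le₁ : X₁ → X₁ → Prop) (le₂ : X₂ → X₂ → Prop)
    (p q : Quotient (glueSetoid A₁ f)) : ENNReal :=
  quotTau (sumTau τ₁ τ₂) (sumRel le₁ le₂) (glueEqv A₁ f) p.out q.out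

section TauLength

variable {T : α → α → ENNReal} {γ : ℝ → α} {a b c : ℝ}

lemma tauLen_le_sum {n : ℕ} {t : Fin (n + 1) → ℝ} (ht : StrictMono t) (h0 : t 0 = a)
    (hn : t (Fin.last n) = b) :
    tauLen T γ a b ≤ ∑ i : Fin n, T (γ (t i.castSucc)) (γ (t i.succ)) :=
  sInf_le ⟨n, t, ht, h0, hn, rfl⟩

lemma tauLen_self : tauLen T γ a a = 0 :=
  nonpos_iff_eq_zero.1 <| by
    simpa using tauLen_le_sum (T := T) (γ := γ) (n := 0) (t := fun _ => a)
      (fun i j h => absurd h (by simp [Fin.fin_one_eq_zero i, Fin.fin_one_eq_zero j])) rfl rfl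

lemma tauLen_le_endpoints (hab : a ≤ b) : tauLen T γ a b ≤ T (γ a) (γ b) := by
  rcases hab.eq_or_lt with rfl | hab
  · simp [tauLen_self]
  · have ht : StrictMono ![a, b] := Fin.strictMono_iff_lt_succ.2 fun i => by
      fin_cases i; simpa using hab
    simpa using tauLen_le_sum (T := T) (γ := γ) (n := 1) ht rfl rfl

lemma tauLen_le_tauLen {β : Type*} {T' : β → β → ENNReal} {γ' : ℝ → β}
    (h : ∀ u ∈ Icc a b, ∀ w ∈ Icc a b, u < w → T (γ u) (γ w) ≤ T' (γ' u) (γ' w)) :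
    tauLen T γ a b ≤ tauLen T' γ' a b := by
  refine le_sInf ?_
  rintro _ ⟨n, t, ht, h0, hn, rfl⟩
  have hmem : ∀ j, t j ∈ Icc a b := fun j =>
    ⟨h0 ▸ ht.monotone (Fin.zero_le j), hn ▸ ht.monotone (Fin.le_last j)⟩
  exact (tauLen_le_sum ht h0 hn).trans <| Finset.sum_le_sum fun i _ =>
    h _ (hmem _) _ (hmem _) (ht Fin.castSucc_lt_succ)

lemma tauLen_congr {γ' : ℝ → α} (h : EqOn γ γ' (Icc a b)) :
    tauLen T γ a b = tauLen T γ' a b :=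
  le_antisymm (tauLen_le_tauLen fun u hu w hw _ => by rw [h hu, h hw])
    (tauLen_le_tauLen fun u hu w hw _ => by rw [h hu, h hw])

lemma tauLen_le_tauLen_comp_add (d : ℝ) :
    tauLen T γ (a + d) (b + d) ≤ tauLen T (fun t => γ (t + d)) a b := by
  refine le_sInf ?_
  rintro _ ⟨n, t, ht, h0, hn, rfl⟩
  exact tauLen_le_sum (t := fun i => t i + d) (fun i j hij => by simpa using ht hij)
    (by simp [h0]) (by simp [hn])

lemma tauLen_le_add_tauLen {m : ℝ} (ham : a < m) :
    tauLen T γ a b ≤ T (γ a) (γ m) + tauLen T γ m b := by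
  conv_rhs => rw [tauLen, ENNReal.add_sInf]
  refine le_iInf₂ ?_
  rintro _ ⟨n, t, ht, h0, hn, rfl⟩
  have hcons : StrictMono (Fin.cons a t : Fin (n + 2) → ℝ) :=
    Fin.strictMono_cons.2 ⟨fun j => ham.trans_le (h0 ▸ ht.monotone (Fin.zero_le j)), ht⟩
  refine (tauLen_le_sum hcons rfl (by simpa using hn)).trans_eq ?_
  rw [Fin.sum_univ_succ]
  simp [h0]

lemma tauLen_add_tauLen_le_sum
    (hbc : b ≤ c) (hrev : ∀ u w, a ≤ u → u < b → b < w → w ≤ c →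
      T (γ u) (γ b) + T (γ b) (γ w) ≤ T (γ u) (γ w)) :
    ∀ (n : ℕ) (t : Fin (n + 1) → ℝ), StrictMono t → a ≤ t 0 → t 0 ≤ b → t (Fin.last n) = c →
      tauLen T γ (t 0) b + tauLen T γ b c ≤ ∑ i : Fin n, T (γ (t i.castSucc)) (γ (t i.succ))
  | 0, t, _, _, h0b, hn => by
    obtain rfl : b = c := le_antisymm hbc (hn ▸ h0b)
    simp [← hn, tauLen_self]
  | n + 1, t, ht, hat, h0b, hn => by
    set s : Fin (n + 1) → ℝ := fun i => t i.succ
    have hs : StrictMono s := ht.comp (Fin.strictMono_succ)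
    have h01 : t 0 < t 1 := ht Fin.zero_lt_one
    have hsum : ∑ i : Fin (n + 1), T (γ (t i.castSucc)) (γ (t i.succ)) =
        T (γ (t 0)) (γ (t 1)) + ∑ i : Fin n, T (γ (s i.castSucc)) (γ (s i.succ)) := by
      simp only [Fin.sum_univ_succ, Fin.castSucc_zero, Fin.succ_zero_eq_one, s, Fin.succ_castSucc]
    rw [hsum]
    rcases le_or_gt (t 1) b with h1b | h1b
    · calc tauLen T γ (t 0) b + tauLen T γ b c
          ≤ T (γ (t 0)) (γ (t 1)) + tauLen T γ (t 1) b + tauLen T γ b c := by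
            gcongr; exact tauLen_le_add_tauLen h01
        _ ≤ _ := by
            rw [add_assoc]
            gcongr
            exact tauLen_add_tauLen_le_sum hbc hrev n s hs (hat.trans h01.le) h1b
              (by simpa [s] using hn)
    · have hleft : tauLen T γ (t 0) b + T (γ b) (γ (t 1)) ≤ T (γ (t 0)) (γ (t 1)) := by
        rcases h0b.eq_or_lt with h0b | h0b
        · rw [h0b, tauLen_self, zero_add]
        · exact (add_le_add_left (tauLen_le_endpoints h0b.le) _).trans
            (hrev _ _ hat h0b h1b (hn ▸ ht.monotone (Fin.le_last 1)))
      calc tauLen T γ (t 0) b + tauLen T γ b c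
          ≤ tauLen T γ (t 0) b + (T (γ b) (γ (t 1)) + tauLen T γ (t 1) c) := by
            gcongr; exact tauLen_le_add_tauLen h1b
        _ ≤ T (γ (t 0)) (γ (t 1)) + tauLen T γ (t 1) c := by
            rw [← add_assoc]; gcongr
        _ ≤ _ := by
            gcongr
            exact tauLen_le_sum (t := s) hs rfl (by simpa [s] using hn)

lemma tauLen_add_tauLen_le (hab : a ≤ b) (hbc : b ≤ c)
    (hrev : ∀ u w, a ≤ u → u < b → b < w → w ≤ c →
      T (γ u) (γ b) + T (γ b) (γ w) ≤ T (γ u) (γ w)) :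
    tauLen T γ a b + tauLen T γ b c ≤ tauLen T γ a c := by
  refine le_sInf ?_
  rintro _ ⟨n, t, ht, h0, hn, rfl⟩
  subst h0
  exact tauLen_add_tauLen_le_sum hbc hrev n t ht le_rfl hab hn

end TauLength

section CausalCurves

variable {D : α → α → ENNReal} {R : α → α → Prop} {γ : ℝ → α} {a b c : ℝ}

/-- The local Lipschitz condition of `IsCausalCurveE` at the point `t`. -/
def LipschitzNear (D : α → α → ENNReal) (γ : ℝ → α) (I : Set ℝ) (t ε : ℝ) (K : NNReal) :
    Prop :=
  ∀ s ∈ I, ∀ s' ∈ I, |s - t| < ε → |s' - t| < ε →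
    D (γ s) (γ s') ≤ K * ENNReal.ofReal |s - s'|

lemma LipschitzNear.mono {I J : Set ℝ} {t ε δ : ℝ} {K K' : NNReal}
    (h : LipschitzNear D γ I t ε K) (hJ : ∀ s ∈ J, |s - t| < δ → s ∈ I) (hδ : δ ≤ ε)
    (hK : K ≤ K') : LipschitzNear D γ J t δ K' := fun s hs s' hs' h₁ h₂ =>
  (h s (hJ s hs h₁) s' (hJ s' hs' h₂) (h₁.trans_le hδ) (h₂.trans_le hδ)).trans (by gcongr)

lemma LipschitzNear.le_of_abs_add_abs (hD : ∀ x y z, D x z ≤ D x y + D y z) {I J : Set ℝ}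
    {t ε : ℝ} {K : NNReal} (hI : LipschitzNear D γ I t ε K) (hJ : LipschitzNear D γ J t ε K)
    (htI : t ∈ I) (htJ : t ∈ J) {s s' : ℝ} (hs : s ∈ I) (hs' : s' ∈ J) (h₁ : |s - t| < ε)
    (h₂ : |s' - t| < ε) (hst : |s - t| + |t - s'| = |s - s'|) :
    D (γ s) (γ s') ≤ K * ENNReal.ofReal |s - s'| := by
  have htt : |t - t| < ε := by simpa using (abs_nonneg _).trans_lt h₁
  calc D (γ s) (γ s') ≤ D (γ s) (γ t) + D (γ t) (γ s') := hD _ _ _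
    _ ≤ K * ENNReal.ofReal |s - t| + K * ENNReal.ofReal |t - s'| :=
      add_le_add (hI s hs t htI h₁ htt) (hJ t htJ s' hs' htt h₂)
    _ = K * ENNReal.ofReal |s - s'| := by
      rw [← mul_add, ← ENNReal.ofReal_add (abs_nonneg _) (abs_nonneg _), hst]

lemma LipschitzNear.union (hD : ∀ x y z, D x z ≤ D x y + D y z) {ε₁ ε₂ : ℝ} {K₁ K₂ : NNReal}
    (h₁ : LipschitzNear D γ (Icc a b) b ε₁ K₁) (h₂ : LipschitzNear D γ (Icc b c) b ε₂ K₂) :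
    LipschitzNear D γ (Icc a c) b (min ε₁ ε₂) (K₁ + K₂) := by
  have h₁' : LipschitzNear D γ (Icc a b) b (min ε₁ ε₂) (K₁ + K₂) :=
    h₁.mono (fun _ hs _ => hs) (min_le_left _ _) le_self_add
  have h₂' : LipschitzNear D γ (Icc b c) b (min ε₁ ε₂) (K₁ + K₂) :=
    h₂.mono (fun _ hs _ => hs) (min_le_right _ _) le_add_self
  have hsplit : ∀ {x y : ℝ}, 0 ≤ (x - b) * (b - y) → |x - b| + |b - y| = |x - y| := fun h => by
    rw [← (abs_add_eq_add_abs_iff _ _).2 (mul_nonneg_iff.1 h), sub_add_sub_cancel]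
  intro s hs s' hs' hsb hs'b
  rcases le_total s b with hs₁ | hs₂ <;> rcases le_total s' b with hs'₁ | hs'₂
  · exact h₁' s ⟨hs.1, hs₁⟩ s' ⟨hs'.1, hs'₁⟩ hsb hs'b
  · exact h₁'.le_of_abs_add_abs hD h₂' ⟨hs.1.trans hs₁, le_rfl⟩ ⟨le_rfl, hs'₂.trans hs'.2⟩
      ⟨hs.1, hs₁⟩ ⟨hs'₂, hs'.2⟩ hsb hs'b
      (hsplit (mul_nonneg_of_nonpos_of_nonpos (by linarith) (by linarith)))
  · exact h₂'.le_of_abs_add_abs hD h₁' ⟨le_rfl, hs₂.trans hs.2⟩ ⟨hs'.1.trans hs'₁, le_rfl⟩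
      ⟨hs₂, hs.2⟩ ⟨hs'.1, hs'₁⟩ hsb hs'b
      (hsplit (mul_nonneg (by linarith) (by linarith)))
  · exact h₂' s ⟨hs₂, hs.2⟩ s' ⟨hs'₂, hs'.2⟩ hsb hs'b

lemma IsCausalCurveE.map {β : Type*} {D' : β → β → ENNReal} {R' : β → β → Prop} (φ : α → β)
    (hD : ∀ x y, D' (φ x) (φ y) ≤ D x y) (hR : ∀ x y, R x y → R' (φ x) (φ y))
    (h : IsCausalCurveE D R γ a b) : IsCausalCurveE D' R' (φ ∘ γ) a b := by
  obtain ⟨hab, hlip, hcaus⟩ := h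
  refine ⟨hab, fun t ht => ?_, fun s hs t ht hst => hR _ _ (hcaus s hs t ht hst)⟩
  obtain ⟨K, ε, hε, hK⟩ := hlip t ht
  exact ⟨K, ε, hε, fun s hs s' hs' h₁ h₂ => (hD _ _).trans (hK s hs s' hs' h₁ h₂)⟩

lemma IsCausalCurveE.congr {γ' : ℝ → α} (h : IsCausalCurveE D R γ a b)
    (hγ : EqOn γ γ' (Icc a b)) : IsCausalCurveE D R γ' a b := by
  obtain ⟨hab, hlip, hcaus⟩ := h
  refine ⟨hab, fun t ht => ?_, fun s hs t ht hst => hγ hs ▸ hγ ht ▸ hcaus s hs t ht hst⟩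
  obtain ⟨K, ε, hε, hK⟩ := hlip t ht
  exact ⟨K, ε, hε, fun s hs s' hs' h₁ h₂ => hγ hs ▸ hγ hs' ▸ hK s hs s' hs' h₁ h₂⟩

lemma IsCausalCurveE.comp_add_right {d : ℝ} (h : IsCausalCurveE D R γ (a + d) (b + d)) :
    IsCausalCurveE D R (fun t => γ (t + d)) a b := by
  obtain ⟨hab, hlip, hcaus⟩ := h
  have hmem : ∀ {t}, t ∈ Icc a b → t + d ∈ Icc (a + d) (b + d) := fun ht =>
    ⟨by linarith [ht.1], by linarith [ht.2]⟩
  refine ⟨by linarith, fun t ht => ?_, fun s hs t ht hst =>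
    hcaus _ (hmem hs) _ (hmem ht) (by linarith)⟩
  obtain ⟨K, ε, hε, hK⟩ := hlip (t + d) (hmem ht)
  exact ⟨K, ε, hε, fun s hs s' hs' h₁ h₂ => by
    simpa using hK _ (hmem hs) _ (hmem hs') (by simpa using h₁) (by simpa using h₂)⟩

lemma IsCausalCurveE.append (hD : ∀ x y z, D x z ≤ D x y + D y z)
    (hR : ∀ x y z, R x y → R y z → R x z)
    (h₁ : IsCausalCurveE D R γ a b) (h₂ : IsCausalCurveE D R γ b c) :
    IsCausalCurveE D R γ a c := by
  obtain ⟨hab, hlip₁, hcaus₁⟩ := h₁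
  obtain ⟨hbc, hlip₂, hcaus₂⟩ := h₂
  refine ⟨hab.trans hbc, fun t ht => ?_, fun s hs t ht hst => ?_⟩
  · rcases lt_trichotomy t b with htb | rfl | hbt
    · obtain ⟨K, ε, hε, hK⟩ := hlip₁ t ⟨ht.1, htb.le⟩
      refine ⟨K, min ε (b - t), lt_min hε (by linarith),
        LipschitzNear.mono hK (fun s hs hst => ⟨hs.1, ?_⟩) (min_le_left _ _) le_rfl⟩
      linarith [(abs_lt.1 (hst.trans_le (min_le_right _ _))).2]
    · obtain ⟨K₁, ε₁, hε₁, hK₁⟩ := hlip₁ t ⟨ht.1, le_rfl⟩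
      obtain ⟨K₂, ε₂, hε₂, hK₂⟩ := hlip₂ t ⟨le_rfl, ht.2⟩
      exact ⟨K₁ + K₂, min ε₁ ε₂, lt_min hε₁ hε₂, LipschitzNear.union hD hK₁ hK₂⟩
    · obtain ⟨K, ε, hε, hK⟩ := hlip₂ t ⟨hbt.le, ht.2⟩
      refine ⟨K, min ε (t - b), lt_min hε (by linarith),
        LipschitzNear.mono hK (fun s hs hst => ⟨?_, hs.2⟩) (min_le_left _ _) le_rfl⟩
      linarith [(abs_lt.1 (hst.trans_le (min_le_right _ _))).1]
  · rcases le_or_gt t b with htb | hbt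
    · exact hcaus₁ s ⟨hs.1, hst.le.trans htb⟩ t ⟨hs.1.trans hst.le, htb⟩ hst
    rcases le_or_gt b s with hbs | hsb
    · exact hcaus₂ s ⟨hbs, hst.le.trans ht.2⟩ t ⟨hbt.le, ht.2⟩ hst
    · exact hR _ _ _ (hcaus₁ s ⟨hs.1, hsb.le⟩ b ⟨hab, le_rfl⟩ hsb)
        (hcaus₂ b ⟨le_rfl, hbc⟩ t ⟨hbt.le, ht.2⟩ hbt)

end CausalCurves

section CurveLengths

variable {D : α → α → ENNReal} {R : α → α → Prop} {T : α → α → ENNReal}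

def curveLengths (D : α → α → ENNReal) (R : α → α → Prop) (T : α → α → ENNReal) (x y : α) :
    Set ENNReal :=
  {v | ∃ γ a b, IsCausalCurveE D R γ a b ∧ γ a = x ∧ γ b = y ∧ v = tauLen T γ a b}

lemma sSup_curveLengths_le (x y : α) : sSup (curveLengths D R T x y) ≤ T x y :=
  sSup_le <| by
    rintro _ ⟨γ, a, b, hγ, rfl, rfl, rfl⟩
    exact tauLen_le_endpoints hγ.1

lemma sSup_curveLengths_le_map {β : Type*} {D' : β → β → ENNReal} {R' : β → β → Prop}
    {T' : β → β → ENNReal} (φ : α → β) (hD : ∀ x y, D' (φ x) (φ y) ≤ D x y)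
    (hR : ∀ x y, R x y → R' (φ x) (φ y)) (hT : ∀ x y, R x y → T x y ≤ T' (φ x) (φ y))
    (x y : α) : sSup (curveLengths D R T x y) ≤ sSup (curveLengths D' R' T' (φ x) (φ y)) :=
  sSup_le <| by
    rintro _ ⟨γ, a, b, hγ, rfl, rfl, rfl⟩
    exact le_sSup_of_le ⟨φ ∘ γ, a, b, hγ.map φ hD hR, rfl, rfl, rfl⟩
      (tauLen_le_tauLen fun u hu w hw huw => hT _ _ (hγ.2.2 u hu w hw huw))

/-- Concatenation of causal curves: the second curve is translated to start where the first
one ends. -/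
lemma add_le_sSup_curveLengths (hD : ∀ x y z, D x z ≤ D x y + D y z)
    (hR : ∀ x y z, R x y → R y z → R x z)
    (hT : ∀ x y z, R x y → R y z → T x y + T y z ≤ T x z) {x y z : α} {ℓ₁ ℓ₂ : ENNReal}
    (h₁ : ℓ₁ ∈ curveLengths D R T x y) (h₂ : ℓ₂ ∈ curveLengths D R T y z) :
    ℓ₁ + ℓ₂ ≤ sSup (curveLengths D R T x z) := by
  obtain ⟨γ₁, a₁, b₁, hγ₁, rfl, rfl, rfl⟩ := h₁
  obtain ⟨γ₂, a₂, b₂, hγ₂, hjoin, rfl, rfl⟩ := h₂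
  set d := a₂ - b₁
  set c := b₂ - d
  have ha₂ : a₂ = b₁ + d := by ring
  have hb₂ : b₂ = c + d := by ring
  rw [ha₂, hb₂] at hγ₂ ⊢
  rw [ha₂] at hjoin
  set Γ : ℝ → α := fun t => if t ≤ b₁ then γ₁ t else γ₂ (t + d)
  have hΓ₁ : EqOn γ₁ Γ (Icc a₁ b₁) := fun t ht => (if_pos ht.2).symm
  have hΓ₂ : EqOn (fun t => γ₂ (t + d)) Γ (Icc b₁ c) := fun t ht => by
    rcases ht.1.eq_or_lt with rfl | hbt
    · simp [Γ, hjoin]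
    · simp [Γ, not_le.2 hbt]
  have hb₁c : b₁ ≤ c := by linarith [hγ₂.1]
  have hΓ : IsCausalCurveE D R Γ a₁ c :=
    (hγ₁.congr hΓ₁).append hD hR (hγ₂.comp_add_right.congr hΓ₂)
  refine le_sSup_of_le ⟨Γ, a₁, c, hΓ, (hΓ₁ ⟨le_rfl, hγ₁.1⟩).symm,
    (hΓ₂ ⟨hb₁c, le_rfl⟩).symm, rfl⟩ ?_
  calc tauLen T γ₁ a₁ b₁ + tauLen T γ₂ (b₁ + d) (c + d)
      ≤ tauLen T Γ a₁ b₁ + tauLen T Γ b₁ c := by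
        rw [tauLen_congr hΓ₁, ← tauLen_congr hΓ₂]
        gcongr
        exact tauLen_le_tauLen_comp_add d
    _ ≤ tauLen T Γ a₁ c := tauLen_add_tauLen_le hγ₁.1 hb₁c fun u w hu hub hbw hw =>
        hT _ _ _ (hΓ.2.2 u ⟨hu, (hub.trans hbw).le.trans hw⟩ b₁ ⟨hγ₁.1, hb₁c⟩ hub)
          (hΓ.2.2 b₁ ⟨hγ₁.1, hb₁c⟩ w ⟨hγ₁.1.trans hbw.le, hw⟩ hbw)

lemma sSup_curveLengths_add_le (hD : ∀ x y z, D x z ≤ D x y + D y z)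
    (hR : ∀ x y z, R x y → R y z → R x z)
    (hT : ∀ x y z, R x y → R y z → T x y + T y z ≤ T x z) {x y z : α}
    (hxy : (curveLengths D R T x y).Nonempty) (hyz : (curveLengths D R T y z).Nonempty) :
    sSup (curveLengths D R T x y) + sSup (curveLengths D R T y z) ≤
      sSup (curveLengths D R T x z) := by
  rw [sSup_eq_iSup (s := curveLengths D R T x y), sSup_eq_iSup (s := curveLengths D R T y z)]
  exact ENNReal.biSup_add_biSup_le hxy hyz fun _ h₁ _ h₂ =>
    add_le_sSup_curveLengths hD hR hT h₁ h₂

end CurveLengths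

section Chains

variable {R eqv : α → α → Prop} {T D : α → α → ENNReal} {x y z : α}

lemma isGlueChain_singleton {u v : α} (hxu : eqv x u) (hvy : eqv v y) :
    IsGlueChain eqv x y [(u, v)] :=
  ⟨List.cons_ne_nil _ _, List.isChain_singleton _, ⟨_, rfl, hxu⟩, ⟨_, rfl, hvy⟩⟩

lemma isCausalChain_singleton {u v : α} (hxu : eqv x u) (huv : R u v) (hvy : eqv v y) :
    IsCausalChain R eqv x y [(u, v)] :=
  ⟨isGlueChain_singleton hxu hvy, by simpa using huv⟩

lemma IsGlueChain.append (heqv : Equivalence eqv) {l₁ l₂ : List (α × α)}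
    (h₁ : IsGlueChain eqv x y l₁) (h₂ : IsGlueChain eqv y z l₂) :
    IsGlueChain eqv x z (l₁ ++ l₂) := by
  obtain ⟨hne₁, hc₁, ⟨p₁, hp₁, hx⟩, ⟨q₁, hq₁, hy₁⟩⟩ := h₁
  obtain ⟨hne₂, hc₂, ⟨p₂, hp₂, hy₂⟩, ⟨q₂, hq₂, hz⟩⟩ := h₂
  refine ⟨by simp [hne₁], hc₁.append hc₂ fun q hq p hp => ?_, ⟨p₁, by simp [hp₁], hx⟩,
    ⟨q₂, by rw [List.getLast?_append_of_ne_nil _ hne₂, hq₂], hz⟩⟩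
  cases hq₁ ▸ hq
  cases hp₂ ▸ hp
  exact heqv.trans hy₁ hy₂

lemma IsCausalChain.append (heqv : Equivalence eqv) {l₁ l₂ : List (α × α)}
    (h₁ : IsCausalChain R eqv x y l₁) (h₂ : IsCausalChain R eqv y z l₂) :
    IsCausalChain R eqv x z (l₁ ++ l₂) :=
  ⟨h₁.1.append heqv h₂.1, by simpa [or_imp, forall_and] using And.intro h₁.2 h₂.2⟩

lemma IsCausalChain.congr (heqv : Equivalence eqv) {x' y' : α} {l : List (α × α)}
    (h : IsCausalChain R eqv x y l) (hx : eqv x' x) (hy : eqv y y') :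
    IsCausalChain R eqv x' y' l := by
  obtain ⟨⟨hne, hc, ⟨p, hp, hxp⟩, ⟨q, hq, hyq⟩⟩, hR⟩ := h
  exact ⟨⟨hne, hc, ⟨p, hp, heqv.trans hx hxp⟩, ⟨q, hq, heqv.trans hyq hy⟩⟩, hR⟩

lemma IsCausalChain.of_cons {p : α × α} {l : List (α × α)} (hl : l ≠ [])
    (h : IsCausalChain R eqv x y (p :: l)) :
    eqv x p.1 ∧ R p.1 p.2 ∧ IsCausalChain R eqv p.2 y l := by
  have hc : (p :: l).IsChain fun p q => eqv p.2 q.1 := h.1.2.1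
  obtain ⟨⟨-, -, ⟨p', hp', hx⟩, ⟨q, hq, hy⟩⟩, hR⟩ := h
  cases Option.some.inj hp'
  obtain ⟨p₂, l', rfl⟩ := List.exists_cons_of_ne_nil hl
  rw [List.isChain_cons_cons] at hc
  rw [List.getLast?_cons_cons] at hq
  exact ⟨hx, hR _ List.mem_cons_self,
    ⟨⟨hl, hc.2, ⟨p₂, rfl, hc.1⟩, ⟨q, hq, hy⟩⟩, fun r hr => hR r (List.mem_cons_of_mem _ hr)⟩⟩

lemma sum_le_quotTau {l : List (α × α)} (h : IsCausalChain R eqv x y l) :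
    (l.map fun p => T p.1 p.2).sum ≤ quotTau T R eqv x y :=
  le_sSup ⟨l, h, rfl⟩

lemma quotTau_le_iff {c : ENNReal} :
    quotTau T R eqv x y ≤ c ↔
      ∀ l, IsCausalChain R eqv x y l → (l.map fun p => T p.1 p.2).sum ≤ c := by
  simp only [quotTau, sSup_le_iff, Set.mem_ofPred_eq]
  exact ⟨fun h l hl => h _ ⟨l, hl, rfl⟩, by rintro h _ ⟨l, hl, rfl⟩; exact h l hl⟩

lemma le_quotTau {u v : α} (hxu : eqv x u) (huv : R u v) (hvy : eqv v y) :
    T u v ≤ quotTau T R eqv x y := by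
  simpa using sum_le_quotTau (T := T) (isCausalChain_singleton hxu huv hvy)

lemma quotTau_congr (heqv : Equivalence eqv) {x' y' : α} (hx : eqv x x') (hy : eqv y y') :
    quotTau T R eqv x y = quotTau T R eqv x' y' := by
  have key : ∀ {x y x' y'}, eqv x x' → eqv y y' → quotTau T R eqv x y ≤ quotTau T R eqv x' y' :=
    fun hx hy => quotTau_le_iff.2 fun l hl => sum_le_quotTau (hl.congr heqv (heqv.symm hx) hy)
  exact le_antisymm (key hx hy) (key (heqv.symm hx) (heqv.symm hy))

lemma quotTau_add_quotTau_le (heqv : Equivalence eqv) (hxy : ∃ l, IsCausalChain R eqv x y l)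
    (hyz : ∃ l, IsCausalChain R eqv y z l) :
    quotTau T R eqv x y + quotTau T R eqv y z ≤ quotTau T R eqv x z := by
  have hsup : ∀ x y, quotTau T R eqv x y =
      ⨆ l, ⨆ _ : IsCausalChain R eqv x y l, (l.map fun p => T p.1 p.2).sum := fun x y =>
    le_antisymm (quotTau_le_iff.2 fun l hl => le_iSup₂_of_le l hl le_rfl)
      (iSup₂_le fun _ hl => sum_le_quotTau hl)
  rw [hsup, hsup]
  exact ENNReal.biSup_add_biSup_le' hxy hyz fun l₁ h₁ l₂ h₂ => by
    simpa using sum_le_quotTau (T := T) (h₁.append heqv h₂)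

lemma quotDist_le_sum {l : List (α × α)} (h : IsGlueChain eqv x y l) :
    quotDist D eqv x y ≤ (l.map fun p => D p.1 p.2).sum :=
  sInf_le ⟨l, h, rfl⟩

lemma quotDist_le_apply {u v : α} (hxu : eqv x u) (hvy : eqv v y) :
    quotDist D eqv x y ≤ D u v := by
  simpa using quotDist_le_sum (D := D) (isGlueChain_singleton hxu hvy)

lemma quotDist_le_add (heqv : Equivalence eqv) (x y z : α) :
    quotDist D eqv x z ≤ quotDist D eqv x y + quotDist D eqv y z := by
  conv_rhs => simp only [quotDist, sInf_eq_iInf]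
  refine ENNReal.le_iInf₂_add_iInf₂ ?_
  rintro _ ⟨l₁, h₁, rfl⟩ _ ⟨l₂, h₂, rfl⟩
  simpa using quotDist_le_sum (D := D) (h₁.append heqv h₂)

lemma glueStep.congr (heqv : Equivalence eqv) {x' y' : α} (h : glueStep R eqv x y)
    (hx : eqv x' x) (hy : eqv y y') : glueStep R eqv x' y' := by
  obtain ⟨u, v, hxu, huv, hvy⟩ := h
  exact ⟨u, v, heqv.trans hx hxu, huv, heqv.trans hvy hy⟩

lemma quotRel.congr (heqv : Equivalence eqv) {x' y' : α} (h : quotRel R eqv x y)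
    (hx : eqv x' x) (hy : eqv y y') : quotRel R eqv x' y' := by
  obtain ⟨m, hxm, hmy⟩ := Relation.TransGen.head'_iff.1 h
  obtain ⟨m', hmm', hm'y⟩ := Relation.TransGen.tail'_iff.1
    (Relation.TransGen.head'_iff.2 ⟨m, hxm.congr heqv hx (heqv.refl m), hmy⟩)
  exact Relation.TransGen.tail'_iff.2 ⟨m', hmm', hm'y.congr heqv (heqv.refl m') hy⟩

lemma quotRel.exists_isCausalChain (heqv : Equivalence eqv) (h : quotRel R eqv x y) :
    ∃ l, IsCausalChain R eqv x y l := by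
  induction h with
  | single h =>
    obtain ⟨u, v, hxu, huv, hvy⟩ := h
    exact ⟨_, isCausalChain_singleton hxu huv hvy⟩
  | tail _ h ih =>
    obtain ⟨l, hl⟩ := ih
    obtain ⟨u, v, hxu, huv, hvy⟩ := h
    exact ⟨_, hl.append heqv (isCausalChain_singleton hxu huv hvy)⟩

end Chains

section Reduction

variable {R eqv C : α → α → Prop} {T : α → α → ENNReal}

/-- Consecutive pairs meeting at one point merge by the reverse triangle inequality; a pair
sandwiched between two crossings is transported back across the first one by `hpull`. -/
lemma IsCausalChain.sum_le_or (hR : ∀ x y z, R x y → R y z → R x z)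
    (hT : ∀ x y z, R x y → R y z → T x y + T y z ≤ T x z)
    (hC : ∀ p q, eqv p q → p = q ∨ C p q)
    (hpull : ∀ m u c c', C m u → C c c' → R u c → R m c' ∧ T m c' = T u c) :
    ∀ {l : List (α × α)} {x y : α}, IsCausalChain R eqv x y l →
      (∃ u v, eqv x u ∧ eqv v y ∧ R u v ∧ (l.map fun p => T p.1 p.2).sum ≤ T u v) ∨
      (∃ u c c' v, eqv x u ∧ eqv v y ∧ R u c ∧ C c c' ∧ R c' v ∧
        (l.map fun p => T p.1 p.2).sum ≤ T u c + T c' v)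
  | [], _, _, h => absurd rfl h.1.1
  | [p], _, _, h => by
    obtain ⟨⟨-, -, ⟨_, hp, hx⟩, ⟨_, hq, hy⟩⟩, hp'⟩ := h
    cases Option.some.inj hp
    cases Option.some.inj hq
    exact Or.inl ⟨p.1, p.2, hx, hy, hp' p List.mem_cons_self, by simp⟩
  | p :: q :: l, x, y, h => by
    obtain ⟨hx, hp, hrest⟩ := h.of_cons (List.cons_ne_nil q l)
    rw [List.map_cons, List.sum_cons]
    rcases IsCausalChain.sum_le_or hR hT hC hpull hrest with
      ⟨u, v, hu, hv, huv, hsum⟩ | ⟨u, c, c', v, hu, hv, huc, hcc', hc'v, hsum⟩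
    · rcases hC _ _ hu with rfl | hcross
      · refine Or.inl ⟨p.1, v, hx, hv, hR _ _ _ hp huv, ?_⟩
        calc _ ≤ T p.1 p.2 + T p.2 v := by gcongr
          _ ≤ T p.1 v := hT _ _ _ hp huv
      · exact Or.inr ⟨p.1, p.2, u, v, hx, hv, hp, hcross, huv, by gcongr⟩
    · rcases hC _ _ hu with rfl | hcross
      · refine Or.inr ⟨p.1, c, c', v, hx, hv, hR _ _ _ hp huc, hcc', hc'v, ?_⟩
        calc _ ≤ T p.1 p.2 + (T p.2 c + T c' v) := by gcongr
          _ ≤ T p.1 c + T c' v := by rw [← add_assoc]; gcongr; exact hT _ _ _ hp huc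
      · obtain ⟨hpc', hτ⟩ := hpull _ _ _ _ hcross hcc' huc
        refine Or.inl ⟨p.1, v, hx, hv, hR _ _ _ (hR _ _ _ hp hpc') hc'v, ?_⟩
        calc _ ≤ T p.1 p.2 + (T p.2 c' + T c' v) := by rw [hτ]; gcongr
          _ ≤ T p.1 c' + T c' v := by rw [← add_assoc]; gcongr; exact hT _ _ _ hp hpc'
          _ ≤ T p.1 v := hT _ _ _ (hR _ _ _ hp hpc') hc'v

lemma quotTau_le_of_forall (hR : ∀ x y z, R x y → R y z → R x z)
    (hT : ∀ x y z, R x y → R y z → T x y + T y z ≤ T x z)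
    (hC : ∀ p q, eqv p q → p = q ∨ C p q)
    (hpull : ∀ m u c c', C m u → C c c' → R u c → R m c' ∧ T m c' = T u c)
    {x y : α} {b : ENNReal} (h₁ : ∀ u v, eqv x u → eqv v y → R u v → T u v ≤ b)
    (h₂ : ∀ u c c' v, eqv x u → eqv v y → R u c → C c c' → R c' v → T u c + T c' v ≤ b) :
    quotTau T R eqv x y ≤ b :=
  quotTau_le_iff.2 fun _ hl => by
    rcases hl.sum_le_or hR hT hC hpull with
      ⟨u, v, hu, hv, huv, hsum⟩ | ⟨u, c, c', v, hu, hv, huc, hcc', hc'v, hsum⟩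
    exacts [hsum.trans (h₁ u v hu hv huv), hsum.trans (h₂ u c c' v hu hv huc hcc' hc'v)]

end Reduction

section Crossing

variable {R C : α → α → Prop} {T : α → α → ENNReal}

/-- If one leg has vanishing `T`, the crossing point is moved along the other leg by `hpast` or
`hfuture`; `hpull` carries the new timelike relation over to the partner point, which makes the
vanishing leg timelike too. -/
lemma exists_pos_lt_add_of_crossing (hpos : ∀ x y, 0 < T x y → R x y)
    (hT : ∀ x y z, R x y → R y z → T x y + T y z ≤ T x z) (hC : ∀ c c', C c c' → C c' c)
    (hpull : ∀ m u c c', C m u → C c c' → R u c → R m c' ∧ T m c' = T u c)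
    (hpast : ∀ {c c' u : α} {r : ENNReal}, C c c' → r < T u c →
      ∃ b b', C b b' ∧ 0 < T b c ∧ r < T u b)
    (hfuture : ∀ {c c' v : α} {r : ENNReal}, C c c' → r < T c' v →
      ∃ b b', C b b' ∧ 0 < T c' b' ∧ r < T b' v)
    {u c c' v : α} {r : ENNReal} (hcc' : C c c') (huc : R u c) (hc'v : R c' v)
    (hr : r < T u c + T c' v) :
    ∃ b b', C b b' ∧ 0 < T u b ∧ 0 < T b' v ∧ r < T u b + T b' v := by
  have pos_add : ∀ {x y : ENNReal}, 0 < x → 0 < x + y := fun h => h.trans_le le_self_add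
  have pos_add' : ∀ {x y : ENNReal}, 0 < y → 0 < x + y := fun h => h.trans_le le_add_self
  by_cases h₁ : T u c = 0
  · rw [h₁, zero_add] at hr
    obtain ⟨b, b', hbb', hc'b', hr'⟩ := hfuture hcc' hr
    obtain ⟨hcb, hτ⟩ := hpull _ _ _ _ hcc' (hC _ _ hbb') (hpos _ _ hc'b')
    exact ⟨b, b', hbb', pos_add' (hτ ▸ hc'b') |>.trans_le (hT _ _ _ huc hcb),
      zero_le.trans_lt hr', hr'.trans_le le_add_self⟩
  by_cases h₂ : T c' v = 0
  · rw [h₂, add_zero] at hr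
    obtain ⟨b, b', hbb', hbc, hr'⟩ := hpast hcc' hr
    obtain ⟨hb'c', hτ⟩ := hpull _ _ _ _ (hC _ _ hbb') hcc' (hpos _ _ hbc)
    exact ⟨b, b', hbb', zero_le.trans_lt hr',
      pos_add (hτ ▸ hbc) |>.trans_le (hT _ _ _ hb'c' hc'v), hr'.trans_le le_self_add⟩
  exact ⟨c, c', hcc', pos_iff_ne_zero.2 h₁, pos_iff_ne_zero.2 h₂, hr⟩

end Crossing

section NonTimelikeIsolating

variable {X : Type*} [TopologicalSpace X] {τ : X → X → ENNReal} {ll : X → X → Prop} {A : Set X}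

lemma exists_mem_pos_lt_tau_left (hτ : LowerSemicontinuous fun p : X × X => τ p.1 p.2)
    (hll : ∀ x y, ll x y ↔ 0 < τ x y)
    (hA : ∀ a ∈ A, (∃ q, ll q a) → ∀ U ∈ nhds a, ∃ b ∈ U ∩ A, ll b a)
    {u a : X} (ha : a ∈ A) {r : ENNReal} (hr : r < τ u a) :
    ∃ b ∈ A, 0 < τ b a ∧ r < τ u b := by
  have hU : {b | r < τ u b} ∈ nhds a :=
    (Continuous.prodMk_right u).continuousAt.preimage_mem_nhds (hτ (u, a) r hr)
  obtain ⟨b, ⟨hbU, hbA⟩, hba⟩ :=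
    hA a ha ⟨u, (hll u a).2 (zero_le.trans_lt hr)⟩ _ hU
  exact ⟨b, hbA, (hll b a).1 hba, hbU⟩

lemma exists_mem_pos_lt_tau_right (hτ : LowerSemicontinuous fun p : X × X => τ p.1 p.2)
    (hll : ∀ x y, ll x y ↔ 0 < τ x y)
    (hA : ∀ a ∈ A, (∃ q, ll a q) → ∀ U ∈ nhds a, ∃ b ∈ U ∩ A, ll a b)
    {a v : X} (ha : a ∈ A) {r : ENNReal} (hr : r < τ a v) :
    ∃ b ∈ A, 0 < τ a b ∧ r < τ b v := by
  have hU : {b | r < τ b v} ∈ nhds a :=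
    (Continuous.prodMk_left v).continuousAt.preimage_mem_nhds (hτ (a, v) r hr)
  obtain ⟨b, ⟨hbU, hbA⟩, hab⟩ :=
    hA a ha ⟨v, (hll a v).2 (zero_le.trans_lt hr)⟩ _ hU
  exact ⟨b, hbA, (hll a b).1 hab, hbU⟩

end NonTimelikeIsolating

section DisjointUnion

variable {X₁ X₂ : Type*} {A₁ : Set X₁} {f : X₁ → X₂} {le₁ : X₁ → X₁ → Prop}
  {le₂ : X₂ → X₂ → Prop} {τ₁ : X₁ → X₁ → ENNReal} {τ₂ : X₂ → X₂ → ENNReal}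

def CrossPair (A₁ : Set X₁) (f : X₁ → X₂) (c c' : X₁ ⊕ X₂) : Prop :=
  (∃ a ∈ A₁, c = .inl a ∧ c' = .inr (f a)) ∨ (∃ a ∈ A₁, c = .inr (f a) ∧ c' = .inl a)

lemma CrossPair.symm {c c' : X₁ ⊕ X₂} (h : CrossPair A₁ f c c') : CrossPair A₁ f c' c := by
  rcases h with ⟨a, ha, rfl, rfl⟩ | ⟨a, ha, rfl, rfl⟩
  exacts [Or.inr ⟨a, ha, rfl, rfl⟩, Or.inl ⟨a, ha, rfl, rfl⟩]

lemma CrossPair.glueEqv {c c' : X₁ ⊕ X₂} (h : CrossPair A₁ f c c') : glueEqv A₁ f c c' := by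
  rcases h with ⟨a, ha, rfl, rfl⟩ | ⟨a, ha, rfl, rfl⟩
  · exact .rel _ _ ⟨a, ha, rfl, rfl⟩
  · exact .symm _ _ (.rel _ _ ⟨a, ha, rfl, rfl⟩)

lemma CrossPair.eq_of_crossPair (hinj : InjOn f A₁) {p q r : X₁ ⊕ X₂}
    (h : CrossPair A₁ f p q) (h' : CrossPair A₁ f q r) : p = r := by
  rcases h with ⟨a, ha, rfl, rfl⟩ | ⟨a, ha, rfl, rfl⟩ <;>
    rcases h' with ⟨b, hb, hq, rfl⟩ | ⟨b, hb, hq, rfl⟩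
  · cases hq
  · rw [hinj ha hb (Sum.inr.inj hq)]
  · rw [Sum.inl.inj hq]
  · cases hq

lemma glueEqv.eq_or_crossPair (hinj : InjOn f A₁) {p q : X₁ ⊕ X₂} (h : glueEqv A₁ f p q) :
    p = q ∨ CrossPair A₁ f p q := by
  induction h with
  | rel p q h => exact Or.inr (Or.inl h)
  | refl => exact Or.inl rfl
  | symm p q _ ih => exact ih.imp Eq.symm CrossPair.symm
  | trans p q r _ _ ih ih' =>
    rcases ih with rfl | h
    · exact ih'
    rcases ih' with rfl | h'
    exacts [Or.inr h, Or.inl (h.eq_of_crossPair hinj h')]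

lemma sumRel_trans (h₁ : ∀ x y z, le₁ x y → le₁ y z → le₁ x z)
    (h₂ : ∀ x y z, le₂ x y → le₂ y z → le₂ x z) (x y z : X₁ ⊕ X₂) :
    sumRel le₁ le₂ x y → sumRel le₁ le₂ y z → sumRel le₁ le₂ x z := by
  rcases x with x | x <;> rcases y with y | y <;> rcases z with z | z <;>
    simp only [sumRel, false_imp_iff, imp_false, not_false_eq_true, implies_true]
  exacts [h₁ x y z, h₂ x y z]

lemma sumTau_add_le (h₁ : ∀ x y z, le₁ x y → le₁ y z → τ₁ x y + τ₁ y z ≤ τ₁ x z)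
    (h₂ : ∀ x y z, le₂ x y → le₂ y z → τ₂ x y + τ₂ y z ≤ τ₂ x z) (x y z : X₁ ⊕ X₂) :
    sumRel le₁ le₂ x y → sumRel le₁ le₂ y z →
      sumTau τ₁ τ₂ x y + sumTau τ₁ τ₂ y z ≤ sumTau τ₁ τ₂ x z := by
  rcases x with x | x <;> rcases y with y | y <;> rcases z with z | z <;>
    simp only [sumRel, false_imp_iff, implies_true]
  exacts [h₁ x y z, h₂ x y z]

lemma sumRel_of_pos (h₁ : ∀ x y, 0 < τ₁ x y → le₁ x y) (h₂ : ∀ x y, 0 < τ₂ x y → le₂ x y)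
    (x y : X₁ ⊕ X₂) : 0 < sumTau τ₁ τ₂ x y → sumRel le₁ le₂ x y := by
  rcases x with x | x <;> rcases y with y | y <;>
    simp only [sumTau, sumRel, lt_self_iff_false, false_imp_iff]
  exacts [h₁ x y, h₂ x y]

lemma CrossPair.pull (hle : ∀ a ∈ A₁, ∀ b ∈ A₁, (le₁ a b ↔ le₂ (f a) (f b)))
    (hτ : ∀ a ∈ A₁, ∀ b ∈ A₁, τ₁ a b = τ₂ (f a) (f b)) (m u c c' : X₁ ⊕ X₂)
    (hmu : CrossPair A₁ f m u) (hcc' : CrossPair A₁ f c c') (huc : sumRel le₁ le₂ u c) :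
    sumRel le₁ le₂ m c' ∧ sumTau τ₁ τ₂ m c' = sumTau τ₁ τ₂ u c := by
  rcases hmu with ⟨a, ha, rfl, rfl⟩ | ⟨a, ha, rfl, rfl⟩ <;>
    rcases hcc' with ⟨b, hb, rfl, rfl⟩ | ⟨b, hb, rfl, rfl⟩ <;> simp only [sumRel] at huc
  · exact ⟨(hle a ha b hb).2 huc, hτ a ha b hb⟩
  · exact ⟨(hle a ha b hb).1 huc, (hτ a ha b hb).symm⟩

variable [TopologicalSpace X₁] [TopologicalSpace X₂] {A₂ : Set X₂} {ll₁ : X₁ → X₁ → Prop}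
  {ll₂ : X₂ → X₂ → Prop}

lemma CrossPair.exists_shift_left (hf : BijOn f A₁ A₂)
    (hτ₁ : LowerSemicontinuous fun p : X₁ × X₁ => τ₁ p.1 p.2)
    (hτ₂ : LowerSemicontinuous fun p : X₂ × X₂ => τ₂ p.1 p.2)
    (hll₁ : ∀ x y, ll₁ x y ↔ 0 < τ₁ x y) (hll₂ : ∀ x y, ll₂ x y ↔ 0 < τ₂ x y)
    (hA₁ : ∀ a ∈ A₁, (∃ q, ll₁ q a) → ∀ U ∈ nhds a, ∃ b ∈ U ∩ A₁, ll₁ b a)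
    (hA₂ : ∀ a ∈ A₂, (∃ q, ll₂ q a) → ∀ U ∈ nhds a, ∃ b ∈ U ∩ A₂, ll₂ b a)
    {c c' u : X₁ ⊕ X₂} {r : ENNReal} (hcc' : CrossPair A₁ f c c')
    (hr : r < sumTau τ₁ τ₂ u c) :
    ∃ b b', CrossPair A₁ f b b' ∧ 0 < sumTau τ₁ τ₂ b c ∧ r < sumTau τ₁ τ₂ u b := by
  rcases hcc' with ⟨a, ha, rfl, rfl⟩ | ⟨a, ha, rfl, rfl⟩ <;> rcases u with u | u <;>
    simp only [sumTau, not_lt_zero] at hr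
  · obtain ⟨b, hb, hba, hub⟩ := exists_mem_pos_lt_tau_left hτ₁ hll₁ hA₁ ha hr
    exact ⟨.inl b, .inr (f b), Or.inl ⟨b, hb, rfl, rfl⟩, hba, hub⟩
  · obtain ⟨b, hb, hba, hub⟩ := exists_mem_pos_lt_tau_left hτ₂ hll₂ hA₂ (hf.mapsTo ha) hr
    obtain ⟨w, hw, rfl⟩ := hf.surjOn hb
    exact ⟨.inr (f w), .inl w, Or.inr ⟨w, hw, rfl, rfl⟩, hba, hub⟩

lemma CrossPair.exists_shift_right (hf : BijOn f A₁ A₂)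
    (hτ₁ : LowerSemicontinuous fun p : X₁ × X₁ => τ₁ p.1 p.2)
    (hτ₂ : LowerSemicontinuous fun p : X₂ × X₂ => τ₂ p.1 p.2)
    (hll₁ : ∀ x y, ll₁ x y ↔ 0 < τ₁ x y) (hll₂ : ∀ x y, ll₂ x y ↔ 0 < τ₂ x y)
    (hA₁ : ∀ a ∈ A₁, (∃ q, ll₁ a q) → ∀ U ∈ nhds a, ∃ b ∈ U ∩ A₁, ll₁ a b)
    (hA₂ : ∀ a ∈ A₂, (∃ q, ll₂ a q) → ∀ U ∈ nhds a, ∃ b ∈ U ∩ A₂, ll₂ a b)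
    {c c' v : X₁ ⊕ X₂} {r : ENNReal} (hcc' : CrossPair A₁ f c c')
    (hr : r < sumTau τ₁ τ₂ c' v) :
    ∃ b b', CrossPair A₁ f b b' ∧ 0 < sumTau τ₁ τ₂ c' b' ∧ r < sumTau τ₁ τ₂ b' v := by
  rcases hcc' with ⟨a, ha, rfl, rfl⟩ | ⟨a, ha, rfl, rfl⟩ <;> rcases v with v | v <;>
    simp only [sumTau, not_lt_zero] at hr
  · obtain ⟨b, hb, hab, hbv⟩ := exists_mem_pos_lt_tau_right hτ₂ hll₂ hA₂ (hf.mapsTo ha) hr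
    obtain ⟨w, hw, rfl⟩ := hf.surjOn hb
    exact ⟨.inl w, .inr (f w), Or.inl ⟨w, hw, rfl, rfl⟩, hab, hbv⟩
  · obtain ⟨b, hb, hab, hbv⟩ := exists_mem_pos_lt_tau_right hτ₁ hll₁ hA₁ ha hr
    exact ⟨.inr (f b), .inl b, Or.inr ⟨b, hb, rfl, rfl⟩, hab, hbv⟩

end DisjointUnion

section Amalgamation

variable {X₁ X₂ : Type*} {A₁ : Set X₁} {f : X₁ → X₂} {le₁ : X₁ → X₁ → Prop}
  {le₂ : X₂ → X₂ → Prop} {τ₁ : X₁ → X₁ → ENNReal} {τ₂ : X₂ → X₂ → ENNReal}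

lemma glueEqv_equivalence : Equivalence (glueEqv A₁ f) :=
  Relation.EqvGen.is_equivalence _

lemma glueEqv_out_mk (u : X₁ ⊕ X₂) : glueEqv A₁ f (Quotient.mk (glueSetoid A₁ f) u).out u :=
  Quotient.exact (Quotient.out_eq (Quotient.mk (glueSetoid A₁ f) u))

lemma mk_eq_of_glueEqv_out {p : Quotient (glueSetoid A₁ f)} {u : X₁ ⊕ X₂}
    (h : glueEqv A₁ f p.out u) : Quotient.mk _ u = p :=
  (Quotient.sound (glueEqv_equivalence.symm h)).trans (Quotient.out_eq p)

lemma qRel_iff {R : X₁ ⊕ X₂ → X₁ ⊕ X₂ → Prop} {p q : Quotient (glueSetoid A₁ f)} :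
    qRel A₁ f R p q ↔ quotRel R (glueEqv A₁ f) p.out q.out := by
  refine ⟨?_, fun h => ⟨_, _, Quotient.out_eq p, Quotient.out_eq q, h⟩⟩
  rintro ⟨x, y, rfl, rfl, h⟩
  exact h.congr glueEqv_equivalence (glueEqv_out_mk x)
    (glueEqv_equivalence.symm (glueEqv_out_mk y))

lemma qRel_trans {R : X₁ ⊕ X₂ → X₁ ⊕ X₂ → Prop} (p q r : Quotient (glueSetoid A₁ f)) :
    qRel A₁ f R p q → qRel A₁ f R q r → qRel A₁ f R p r := by
  simp only [qRel_iff]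
  exact Relation.TransGen.trans

lemma qRel_mk {R : X₁ ⊕ X₂ → X₁ ⊕ X₂ → Prop} {u v : X₁ ⊕ X₂} (h : R u v) :
    qRel A₁ f R (Quotient.mk _ u) (Quotient.mk _ v) :=
  ⟨u, v, rfl, rfl, .single ⟨u, v, glueEqv_equivalence.refl u, h, glueEqv_equivalence.refl v⟩⟩

lemma qTau_mk (u v : X₁ ⊕ X₂) :
    qTau A₁ f τ₁ τ₂ le₁ le₂ (Quotient.mk _ u) (Quotient.mk _ v) =
      quotTau (sumTau τ₁ τ₂) (sumRel le₁ le₂) (glueEqv A₁ f) u v :=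
  quotTau_congr glueEqv_equivalence (glueEqv_out_mk u) (glueEqv_out_mk v)

lemma le_qTau_mk {u v : X₁ ⊕ X₂} (h : sumRel le₁ le₂ u v) :
    sumTau τ₁ τ₂ u v ≤ qTau A₁ f τ₁ τ₂ le₁ le₂ (Quotient.mk _ u) (Quotient.mk _ v) :=
  qTau_mk (A₁ := A₁) (f := f) u v ▸
    le_quotTau (glueEqv_equivalence.refl u) h (glueEqv_equivalence.refl v)

lemma qTau_add_qTau_le (p q r : Quotient (glueSetoid A₁ f)) :
    qRel A₁ f (sumRel le₁ le₂) p q → qRel A₁ f (sumRel le₁ le₂) q r →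
      qTau A₁ f τ₁ τ₂ le₁ le₂ p q + qTau A₁ f τ₁ τ₂ le₁ le₂ q r ≤
        qTau A₁ f τ₁ τ₂ le₁ le₂ p r := by
  simp only [qRel_iff]
  exact fun hpq hqr => quotTau_add_quotTau_le glueEqv_equivalence
    (hpq.exists_isCausalChain glueEqv_equivalence) (hqr.exists_isCausalChain glueEqv_equivalence)

variable [PseudoEMetricSpace X₁] [PseudoEMetricSpace X₂]

lemma qDist_mk_le (u v : X₁ ⊕ X₂) :
    qDist A₁ f (Quotient.mk _ u) (Quotient.mk _ v) ≤ sumEDist u v :=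
  quotDist_le_apply (glueEqv_out_mk u) (glueEqv_equivalence.symm (glueEqv_out_mk v))

lemma qDist_le_add (p q r : Quotient (glueSetoid A₁ f)) :
    qDist A₁ f p r ≤ qDist A₁ f p q + qDist A₁ f q r :=
  quotDist_le_add glueEqv_equivalence _ _ _

lemma sumTau_le_sSup_curveLengths
    (h₁ : ∀ x y, τ₁ x y = sSup (curveLengths (fun u w => edist u w) le₁ τ₁ x y))
    (h₂ : ∀ x y, τ₂ x y = sSup (curveLengths (fun u w => edist u w) le₂ τ₂ x y))
    (u v : X₁ ⊕ X₂) :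
    sumTau τ₁ τ₂ u v ≤ sSup (curveLengths (qDist A₁ f) (qRel A₁ f (sumRel le₁ le₂))
      (qTau A₁ f τ₁ τ₂ le₁ le₂) (Quotient.mk _ u) (Quotient.mk _ v)) := by
  rcases u with x | x <;> rcases v with y | y
  · exact (h₁ x y).trans_le <| sSup_curveLengths_le_map (fun x => Quotient.mk _ (.inl x))
      (fun x y => qDist_mk_le (.inl x) (.inl y)) (fun _ _ => qRel_mk (R := sumRel le₁ le₂))
      (fun _ _ => le_qTau_mk (u := .inl _) (v := .inl _)) x y
  · exact zero_le
  · exact zero_le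
  · exact (h₂ x y).trans_le <| sSup_curveLengths_le_map (fun x => Quotient.mk _ (.inr x))
      (fun x y => qDist_mk_le (.inr x) (.inr y)) (fun _ _ => qRel_mk (R := sumRel le₁ le₂))
      (fun _ _ => le_qTau_mk (u := .inr _) (v := .inr _)) x y

lemma sumTau_add_sumTau_le_sSup_curveLengths
    (h : ∀ u v, sumTau τ₁ τ₂ u v ≤ sSup (curveLengths (qDist A₁ f) (qRel A₁ f (sumRel le₁ le₂))
      (qTau A₁ f τ₁ τ₂ le₁ le₂) (Quotient.mk _ u) (Quotient.mk _ v)))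
    {u b b' v : X₁ ⊕ X₂} (hbb' : glueEqv A₁ f b b') (hub : 0 < sumTau τ₁ τ₂ u b)
    (hb'v : 0 < sumTau τ₁ τ₂ b' v) :
    sumTau τ₁ τ₂ u b + sumTau τ₁ τ₂ b' v ≤
      sSup (curveLengths (qDist A₁ f) (qRel A₁ f (sumRel le₁ le₂)) (qTau A₁ f τ₁ τ₂ le₁ le₂)
        (Quotient.mk _ u) (Quotient.mk _ v)) := by
  have nonempty : ∀ {S : Set ENNReal}, 0 < sSup S → S.Nonempty := fun hS =>
    Set.nonempty_iff_ne_empty.2 fun h => by simp [h] at hS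
  have hmk : Quotient.mk (glueSetoid A₁ f) b = Quotient.mk _ b' := Quotient.sound hbb'
  have hub' := h u b
  have hb'v' := h b' v
  rw [← hmk] at hb'v'
  exact (add_le_add hub' hb'v').trans <| sSup_curveLengths_add_le qDist_le_add qRel_trans
    qTau_add_qTau_le (nonempty (hub.trans_le hub')) (nonempty (hb'v.trans_le hb'v'))

end Amalgamation

theorem amalgamation_intrinsic_general
    {X₁ X₂ : Type*} [MetricSpace X₁] [MetricSpace X₂]
    (A₁ : Set X₁) (A₂ : Set X₂)
    (f : X₁ → X₂) (hf : Set.BijOn f A₁ A₂)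
    (ll₁ le₁ : X₁ → X₁ → Prop) (ll₂ le₂ : X₂ → X₂ → Prop)
    (τ₁ : X₁ → X₁ → ENNReal) (τ₂ : X₂ → X₂ → ENNReal)
    (le₁_trans : ∀ x y z, le₁ x y → le₁ y z → le₁ x z)
    (le₂_trans : ∀ x y z, le₂ x y → le₂ y z → le₂ x z)
    (ll₁_le : ∀ x y, ll₁ x y → le₁ x y) (ll₂_le : ∀ x y, ll₂ x y → le₂ x y)
    (τ₁_lsc : LowerSemicontinuous fun p : X₁ × X₁ => τ₁ p.1 p.2)
    (τ₂_lsc : LowerSemicontinuous fun p : X₂ × X₂ => τ₂ p.1 p.2)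
    (rev_tri₁ : ∀ x y z, le₁ x y → le₁ y z → τ₁ x y + τ₁ y z ≤ τ₁ x z)
    (rev_tri₂ : ∀ x y z, le₂ x y → le₂ y z → τ₂ x y + τ₂ y z ≤ τ₂ x z)
    (ll₁_iff : ∀ x y, ll₁ x y ↔ 0 < τ₁ x y) (ll₂_iff : ∀ x y, ll₂ x y ↔ 0 < τ₂ x y)
    (ntli₁_future : ∀ a ∈ A₁, (∃ q, ll₁ a q) → ∀ U ∈ nhds a, ∃ b ∈ U ∩ A₁, ll₁ a b)
    (ntli₁_past : ∀ a ∈ A₁, (∃ q, ll₁ q a) → ∀ U ∈ nhds a, ∃ b ∈ U ∩ A₁, ll₁ b a)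
    (ntli₂_future : ∀ a ∈ A₂, (∃ q, ll₂ a q) → ∀ U ∈ nhds a, ∃ b ∈ U ∩ A₂, ll₂ a b)
    (ntli₂_past : ∀ a ∈ A₂, (∃ q, ll₂ q a) → ∀ U ∈ nhds a, ∃ b ∈ U ∩ A₂, ll₂ b a)
    (hpres_le : ∀ a ∈ A₁, ∀ b ∈ A₁, (le₁ a b ↔ le₂ (f a) (f b)))
    (hpres_tau : ∀ a ∈ A₁, ∀ b ∈ A₁, τ₁ a b = τ₂ (f a) (f b))
    (intrinsic₁ : ∀ x y, τ₁ x y = sSup {v | ∃ γ a b,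
      IsCausalCurveE (fun u w => edist u w) le₁ γ a b ∧ γ a = x ∧ γ b = y ∧
        v = tauLen τ₁ γ a b})
    (intrinsic₂ : ∀ x y, τ₂ x y = sSup {v | ∃ γ a b,
      IsCausalCurveE (fun u w => edist u w) le₂ γ a b ∧ γ a = x ∧ γ b = y ∧
        v = tauLen τ₂ γ a b})
    :
    ∀ p q : Quotient (glueSetoid A₁ f),
      qTau A₁ f τ₁ τ₂ le₁ le₂ p q = sSup {v | ∃ γ a b,
        IsCausalCurveE (qDist A₁ f) (qRel A₁ f (sumRel le₁ le₂)) γ a b ∧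
          γ a = p ∧ γ b = q ∧ v = tauLen (qTau A₁ f τ₁ τ₂ le₁ le₂) γ a b} := by
  have hL := sumTau_le_sSup_curveLengths (A₁ := A₁) (f := f) intrinsic₁ intrinsic₂
  have hR := sumRel_trans le₁_trans le₂_trans
  have hT := sumTau_add_le rev_tri₁ rev_tri₂
  have hpull := CrossPair.pull hpres_le hpres_tau
  intro p q
  refine le_antisymm ?_ (sSup_curveLengths_le p q)
  refine quotTau_le_of_forall hR hT (fun _ _ => glueEqv.eq_or_crossPair hf.injOn) hpull
    (fun u v hu hv _ => ?_) (fun u c c' v hu hv huc hcc' hc'v => ?_)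
  all_goals rw [← mk_eq_of_glueEqv_out hu, ← mk_eq_of_glueEqv_out (glueEqv_equivalence.symm hv)]
  · exact hL u v
  refine le_of_forall_lt fun r hr => ?_
  obtain ⟨b, b', hbb', hub, hb'v, hr⟩ := exists_pos_lt_add_of_crossing
    (sumRel_of_pos (fun x y h => ll₁_le x y ((ll₁_iff x y).2 h))
      (fun x y h => ll₂_le x y ((ll₂_iff x y).2 h))) hT (fun _ _ => CrossPair.symm) hpull
    (CrossPair.exists_shift_left hf τ₁_lsc τ₂_lsc ll₁_iff ll₂_iff ntli₁_past ntli₂_past)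
    (CrossPair.exists_shift_right hf τ₁_lsc τ₂_lsc ll₁_iff ll₂_iff ntli₁_future ntli₂_future)
    hcc' huc hc'v hr
  exact hr.trans_le (sumTau_add_sumTau_le_sSup_curveLengths hL hbb'.glueEqv hub hb'v)

/-- If `X₁` and `X₂` are intrinsic Lorentzian pre-length spaces, then their
amalgamation is intrinsic: `τ̃` is the supremum of `τ̃`-lengths of causal curves. -/
theorem amalgamation_intrinsic
    {X₁ X₂ : Type*} [MetricSpace X₁] [MetricSpace X₂]
    (A₁ : Set X₁) (A₂ : Set X₂) (hA₁ : IsClosed A₁) (hA₂ : IsClosed A₂)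
    (f : X₁ → X₂) (g : X₂ → X₁) (hf : Set.BijOn f A₁ A₂)
    (hgf : ∀ a ∈ A₁, g (f a) = a) (hfc : ContinuousOn f A₁) (hgc : ContinuousOn g A₂)
    (hlip : ∀ a ∈ A₁, ∃ ε > (0:ℝ), ∃ K : NNReal, ∀ x ∈ A₁ ∩ Metric.ball a ε,
      ∀ y ∈ A₁ ∩ Metric.ball a ε,
        dist (f x) (f y) ≤ K * dist x y ∧ dist x y ≤ K * dist (f x) (f y))
    (ll₁ le₁ : X₁ → X₁ → Prop) (ll₂ le₂ : X₂ → X₂ → Prop)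
    (τ₁ : X₁ → X₁ → ENNReal) (τ₂ : X₂ → X₂ → ENNReal)
    (le₁_refl : ∀ x, le₁ x x) (le₁_trans : ∀ x y z, le₁ x y → le₁ y z → le₁ x z)
    (le₂_refl : ∀ x, le₂ x x) (le₂_trans : ∀ x y z, le₂ x y → le₂ y z → le₂ x z)
    (ll₁_trans : ∀ x y z, ll₁ x y → ll₁ y z → ll₁ x z)
    (ll₂_trans : ∀ x y z, ll₂ x y → ll₂ y z → ll₂ x z)
    (ll₁_le : ∀ x y, ll₁ x y → le₁ x y) (ll₂_le : ∀ x y, ll₂ x y → le₂ x y)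
    (τ₁_lsc : LowerSemicontinuous fun p : X₁ × X₁ => τ₁ p.1 p.2)
    (τ₂_lsc : LowerSemicontinuous fun p : X₂ × X₂ => τ₂ p.1 p.2)
    (rev_tri₁ : ∀ x y z, le₁ x y → le₁ y z → τ₁ x y + τ₁ y z ≤ τ₁ x z)
    (rev_tri₂ : ∀ x y z, le₂ x y → le₂ y z → τ₂ x y + τ₂ y z ≤ τ₂ x z)
    (ll₁_iff : ∀ x y, ll₁ x y ↔ 0 < τ₁ x y) (ll₂_iff : ∀ x y, ll₂ x y ↔ 0 < τ₂ x y)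
    (ntli₁_future : ∀ a ∈ A₁, (∃ q, ll₁ a q) → ∀ U ∈ nhds a, ∃ b ∈ U ∩ A₁, ll₁ a b)
    (ntli₁_past : ∀ a ∈ A₁, (∃ q, ll₁ q a) → ∀ U ∈ nhds a, ∃ b ∈ U ∩ A₁, ll₁ b a)
    (ntli₂_future : ∀ a ∈ A₂, (∃ q, ll₂ a q) → ∀ U ∈ nhds a, ∃ b ∈ U ∩ A₂, ll₂ a b)
    (ntli₂_past : ∀ a ∈ A₂, (∃ q, ll₂ q a) → ∀ U ∈ nhds a, ∃ b ∈ U ∩ A₂, ll₂ b a)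
    (hpres_le : ∀ a ∈ A₁, ∀ b ∈ A₁, (le₁ a b ↔ le₂ (f a) (f b)))
    (hpres_ll : ∀ a ∈ A₁, ∀ b ∈ A₁, (ll₁ a b ↔ ll₂ (f a) (f b)))
    (hpres_tau : ∀ a ∈ A₁, ∀ b ∈ A₁, τ₁ a b = τ₂ (f a) (f b))
    (hcompat : ∀ a ∈ A₁, ((∃ q, ll₁ a q) ↔ (∃ q, ll₂ (f a) q)) ∧
      ((∃ q, ll₁ q a) ↔ (∃ q, ll₂ q (f a))))
    (intrinsic₁ : ∀ x y, τ₁ x y = sSup {v | ∃ γ a b,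
      IsCausalCurveE (fun u w => edist u w) le₁ γ a b ∧ γ a = x ∧ γ b = y ∧
        v = tauLen τ₁ γ a b})
    (intrinsic₂ : ∀ x y, τ₂ x y = sSup {v | ∃ γ a b,
      IsCausalCurveE (fun u w => edist u w) le₂ γ a b ∧ γ a = x ∧ γ b = y ∧
        v = tauLen τ₂ γ a b})
    :
    ∀ p q : Quotient (glueSetoid A₁ f),
      qTau A₁ f τ₁ τ₂ le₁ le₂ p q = sSup {v | ∃ γ a b,
        IsCausalCurveE (qDist A₁ f) (qRel A₁ f (sumRel le₁ le₂)) γ a b ∧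
          γ a = p ∧ γ b = q ∧ v = tauLen (qTau A₁ f τ₁ τ₂ le₁ le₂) γ a b} :=
  amalgamation_intrinsic_general A₁ A₂ f hf ll₁ le₁ ll₂ le₂ τ₁ τ₂ le₁_trans le₂_trans ll₁_le ll₂_le
    τ₁_lsc τ₂_lsc rev_tri₁ rev_tri₂ ll₁_iff ll₂_iff ntli₁_future ntli₁_past ntli₂_future ntli₂_past
    hpres_le hpres_tau intrinsic₁ intrinsic₂
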